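/- arXiv:1307.5424 — 2 statements merged into one kernel-verified Lean document; each statement's English description precedes it below -/
import Mathlib

section
/- Let f be a probability density with support [a,∞), differentiable on (a,∞), with λ_f := sup_{y>a}(-f'(y)/f(y)) ∈ (0,∞). Fix λ ≥ λ_f, let E be exponential with rate λ, and let Z be an independent random variable with distribution G(x) = F(x) + f(x)/λ. Then E + Z has density f, i.e., if ξ has density f, then ξ is equal in distribution to E + Z. -/
open MeasureTheory ProbabilityTheory Set

/-! By independence, `P(E + Z ≤ x) = ∫₀^∞ λ e^{-λt} G(x - t) dt
= e^{-λx} ∫_{-∞}^x e^{λs} (λ F(s) + f(s)) ds`. The last integrand is the derivative of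
`e^{λs} F(s)` on `(a, ∞)` and vanishes below `a`, so the integral is `e^{λx} F(x)` and the
distribution function of `E + Z` is `F`. -/

lemma MeasureTheory.Measure.conv_apply_Iic (μ ν : Measure ℝ) [SFinite ν] (x : ℝ) :
    (μ ∗ ν) (Iic x) = ∫⁻ t, ν (Iic (x - t)) ∂μ := by
  have hmeas : MeasurableSet ((fun p : ℝ × ℝ => p.1 + p.2) ⁻¹' Iic x) :=
    measurable_add measurableSet_Iic
  rw [Measure.conv, Measure.map_apply measurable_add measurableSet_Iic, Measure.prod_apply hmeas]
  congr 1 with t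
  congr 1 with s
  simp [le_sub_iff_add_le']

section ExponentialPDF

variable {r : ℝ}

lemma exponentialPDFReal_eq (r x : ℝ) :
    exponentialPDFReal r x = if 0 ≤ x then r * Real.exp (-(r * x)) else 0 := by
  simp only [exponentialPDFReal, gammaPDFReal, Real.rpow_one, Real.Gamma_one, div_one, sub_self,
    Real.rpow_zero, mul_one]

lemma exponentialPDFReal_le (hr : 0 < r) (x : ℝ) : exponentialPDFReal r x ≤ r := by
  rw [exponentialPDFReal_eq]
  split_ifs with hx
  · exact mul_le_of_le_one_right hr.le (Real.exp_le_one_iff.2 (by nlinarith))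
  · exact hr.le

lemma integrable_exponentialPDFReal (hr : 0 < r) : Integrable (exponentialPDFReal r) := by
  refine ⟨(measurable_exponentialPDFReal r).aestronglyMeasurable,
    (hasFiniteIntegral_iff_ofReal (ae_of_all _ (exponentialPDFReal_nonneg hr))).2 ?_⟩
  have h := lintegral_exponentialPDF_eq_one hr
  simp only [exponentialPDF] at h
  simp [h]

lemma lintegral_ofReal_expMeasure (hr : 0 < r) {g : ℝ → ℝ} (hg : ∀ t, 0 ≤ g t)
    (hint : Integrable fun t => exponentialPDFReal r t * g t) :
    ∫⁻ t, ENNReal.ofReal (g t) ∂expMeasure r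
      = ENNReal.ofReal (∫ t, exponentialPDFReal r t * g t) := by
  rw [ofReal_integral_eq_lintegral_ofReal hint
      (ae_of_all _ fun t => mul_nonneg (exponentialPDFReal_nonneg hr t) (hg t)),
    expMeasure, gammaMeasure,
    lintegral_withDensity_eq_lintegral_mul_non_measurable _ (f := gammaPDF 1 r)
      (measurable_gammaPDFReal 1 r).ennreal_ofReal (ae_of_all _ fun _ => ENNReal.ofReal_lt_top)]
  exact lintegral_congr fun t => (ENNReal.ofReal_mul (exponentialPDFReal_nonneg hr t)).symm

lemma integral_exponentialPDFReal_mul_sub (r x : ℝ) (g : ℝ → ℝ) :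
    ∫ t, exponentialPDFReal r t * g (x - t)
      = Real.exp (-(r * x)) * ∫ s in Iic x, Real.exp (r * s) * (r * g s) := by
  rw [← integral_const_mul, ← integral_indicator measurableSet_Iic]
  conv_rhs => rw [← integral_sub_left_eq_self _ volume x]
  congr 1 with t
  by_cases ht : 0 ≤ t
  · rw [indicator_of_mem (by simpa using ht), exponentialPDFReal_eq, if_pos ht, ← mul_assoc,
      ← Real.exp_add, show -(r * x) + r * (x - t) = -(r * t) by ring]
    ring
  · rw [indicator_of_notMem (by simpa using ht), exponentialPDFReal_eq, if_neg ht, zero_mul]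

end ExponentialPDF

section Primitive

variable {f : ℝ → ℝ} {a : ℝ}

lemma integral_Iic_eq_zero_of_le {x : ℝ} (hf : ∀ y < a, f y = 0) (hx : x ≤ a) :
    ∫ y in Iic x, f y = 0 := by
  rw [integral_Iic_eq_integral_Iio]
  exact setIntegral_eq_zero_of_forall_eq_zero fun y hy => hf y (lt_of_lt_of_le hy hx)

lemma integral_Iic_eq_add_intervalIntegral (hf : Integrable f) (b x : ℝ) :
    ∫ y in Iic x, f y = (∫ y in Iic b, f y) + ∫ y in b..x, f y := by
  rw [← intervalIntegral.integral_Iic_sub_Iic hf.integrableOn hf.integrableOn]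
  ring

lemma continuous_integral_Iic (hf : Integrable f) : Continuous fun x => ∫ y in Iic x, f y := by
  rw [funext (integral_Iic_eq_add_intervalIntegral hf 0)]
  exact continuous_const.add (hf.continuous_primitive 0)

lemma hasDerivAt_integral_Iic (hf : Integrable f) {x : ℝ} (hx : ContinuousAt f x) :
    HasDerivAt (fun x => ∫ y in Iic x, f y) (f x) x := by
  rw [funext (integral_Iic_eq_add_intervalIntegral hf x)]
  exact (intervalIntegral.integral_hasDerivAt_right hf.intervalIntegrable
    hf.aestronglyMeasurable.stronglyMeasurableAtFilter hx).const_add _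

lemma norm_integral_Iic_le (hf : Integrable f) (x : ℝ) : ‖∫ y in Iic x, f y‖ ≤ ∫ y, ‖f y‖ :=
  (norm_integral_le_integral_norm _).trans
    (setIntegral_le_integral hf.norm (ae_of_all _ fun _ => norm_nonneg _))

theorem integral_Iic_exp_mul_primitive (hf : Integrable f) (hsupp : ∀ x < a, f x = 0)
    (hcont : ContinuousOn f (Ioi a)) (r x : ℝ) :
    ∫ s in Iic x, Real.exp (r * s) * (r * (∫ y in Iic s, f y) + f s)
      = Real.exp (r * x) * ∫ y in Iic x, f y := by
  set F : ℝ → ℝ := fun x => ∫ y in Iic x, f y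
  show ∫ s in Iic x, Real.exp (r * s) * (r * F s + f s) = Real.exp (r * x) * F x
  have hF0 : ∀ s ≤ a, F s = 0 := fun s hs => integral_Iic_eq_zero_of_le hsupp hs
  have hvanish : ∀ s < a, Real.exp (r * s) * (r * F s + f s) = 0 := fun s hs => by
    rw [hF0 s hs.le, hsupp s hs]
    ring
  rcases le_total x a with hxa | hax
  · rw [hF0 x hxa, mul_zero]
    exact integral_Iic_eq_zero_of_le hvanish hxa
  have hexp : Continuous fun s => Real.exp (r * s) := by fun_prop
  have hderiv : ∀ s ∈ Ioi a, HasDerivAt (fun s => Real.exp (r * s) * F s)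
      (Real.exp (r * s) * (r * F s + f s)) s := fun s hs => by
    have he : HasDerivAt (fun s => Real.exp (r * s)) (Real.exp (r * s) * r) s := by
      simpa using ((hasDerivAt_id s).const_mul r).exp
    have hF' : HasDerivAt F (f s) s :=
      hasDerivAt_integral_Iic hf (hcont.continuousAt (Ioi_mem_nhds hs))
    exact (he.mul hF').congr_deriv (by ring)
  calc ∫ s in Iic x, Real.exp (r * s) * (r * F s + f s)
      = ∫ s in Icc a x, Real.exp (r * s) * (r * F s + f s) :=
        setIntegral_eq_of_subset_of_forall_sdiff_eq_zero measurableSet_Iic Icc_subset_Iic_self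
          fun s ⟨hsx, hs⟩ => hvanish s (not_le.1 fun h => hs ⟨h, hsx⟩)
    _ = ∫ s in a..x, Real.exp (r * s) * (r * F s + f s) := by
        rw [integral_Icc_eq_integral_Ioc, intervalIntegral.integral_of_le hax]
    _ = Real.exp (r * x) * F x - Real.exp (r * a) * F a :=
        intervalIntegral.integral_eq_sub_of_hasDeriv_right_of_le hax
          (hexp.mul (continuous_integral_Iic hf)).continuousOn
          (fun s hs => (hderiv s hs.1).hasDerivWithinAt)
          ((((continuous_integral_Iic hf).const_mul r).intervalIntegrable a x).add
            hf.intervalIntegrable |>.continuousOn_mul hexp.continuousOn)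
    _ = Real.exp (r * x) * F x := by rw [hF0 a le_rfl, mul_zero, sub_zero]

theorem integral_exponentialPDFReal_mul_cdf_add (hf : Integrable f) (hsupp : ∀ x < a, f x = 0)
    (hcont : ContinuousOn f (Ioi a)) {r : ℝ} (hr : r ≠ 0) (x : ℝ) :
    ∫ t, exponentialPDFReal r t * ((∫ y in Iic (x - t), f y) + f (x - t) / r)
      = ∫ y in Iic x, f y := by
  refine (integral_exponentialPDFReal_mul_sub r x fun s => (∫ y in Iic s, f y) + f s / r).trans ?_
  simp_rw [mul_add r, mul_div_cancel₀ _ hr, integral_Iic_exp_mul_primitive hf hsupp hcont,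
    ← mul_assoc, ← Real.exp_add, neg_add_cancel, Real.exp_zero, one_mul]

lemma integrable_exponentialPDFReal_mul_cdf_add (hf : Integrable f) {r : ℝ} (hr : 0 < r)
    (x : ℝ) :
    Integrable fun t => exponentialPDFReal r t * ((∫ y in Iic (x - t), f y) + f (x - t) / r) := by
  simp_rw [mul_add]
  refine Integrable.add ?_ ?_
  · exact (integrable_exponentialPDFReal hr).mul_bdd
      ((continuous_integral_Iic hf).comp (continuous_sub_left x)).aestronglyMeasurable
      (ae_of_all _ fun t => norm_integral_Iic_le hf _)
  · refine ((hf.comp_sub_left x).div_const r).bdd_mul (c := r)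
      (measurable_exponentialPDFReal r).aestronglyMeasurable (ae_of_all _ fun t => ?_)
    rw [Real.norm_of_nonneg (exponentialPDFReal_nonneg hr t)]
    exact exponentialPDFReal_le hr t

end Primitive

theorem stmt1_general
    {Ω : Type*} [MeasureSpace Ω] (P : Measure Ω) [IsProbabilityMeasure P]
    (f : ℝ → ℝ) (a lamf lam : ℝ)
    (hf_nonneg : ∀ x, 0 ≤ f x)
    (hf_integrable : Integrable f)
    (hf_supp : ∀ x < a, f x = 0)
    (hf_diff : ∀ x ∈ Ioi a, DifferentiableAt ℝ f x)
    (hlamf_pos : 0 < lamf)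
    (hlam : lamf ≤ lam)
    (F G : ℝ → ℝ)
    (hF : ∀ x, F x = ∫ y in Iic x, f y)
    (hG : ∀ x, G x = F x + f x / lam)
    (E Z : Ω → ℝ)
    (hE_meas : Measurable E) (hZ_meas : Measurable Z)
    (hEZ_indep : IndepFun E Z P)
    (hE_law : Measure.map E P = expMeasure lam)
    (hZ_law : ∀ x, (Measure.map Z P (Iic x)) = ENNReal.ofReal (G x)) :
    Measure.map (fun ω => E ω + Z ω) P
      = volume.withDensity (fun x => ENNReal.ofReal (f x)) := by
  have hlam_pos : 0 < lam := hlamf_pos.trans_le hlam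
  have hcont : ContinuousOn f (Ioi a) := fun x hx => (hf_diff x hx).continuousAt.continuousWithinAt
  have hsum : Measure.map (fun ω => E ω + Z ω) P = expMeasure lam ∗ Measure.map Z P := by
    rw [← hE_law]
    exact hEZ_indep.map_add_eq_map_conv_map hE_meas hZ_meas
  refine Measure.ext_of_Iic _ _ fun x => ?_
  rw [hsum, Measure.conv_apply_Iic, withDensity_apply _ measurableSet_Iic,
    ← ofReal_integral_eq_lintegral_ofReal hf_integrable.integrableOn (ae_of_all _ hf_nonneg)]
  simp_rw [hZ_law, hG, hF]
  rw [lintegral_ofReal_expMeasure hlam_pos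
      (fun t => add_nonneg (integral_nonneg hf_nonneg) (div_nonneg (hf_nonneg _) hlam_pos.le))
      (integrable_exponentialPDFReal_mul_cdf_add hf_integrable hlam_pos x),
    integral_exponentialPDFReal_mul_cdf_add hf_integrable hf_supp hcont hlam_pos.ne']

/-- With `f ∈ H`, `λ ≥ λ_f`, `E ~ Exp(λ)` independent of `Z ~ G`
where `G x = F x + f x / λ`, the sum `E + Z` has density `f`, i.e. it is equal
in distribution to a random variable `ξ` with density `f`. -/
theorem stmt1
    {Ω : Type*} [MeasureSpace Ω] (P : Measure Ω) [IsProbabilityMeasure P]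
    (f : ℝ → ℝ) (a lamf lam : ℝ)
    (hf_nonneg : ∀ x, 0 ≤ f x)
    (hf_int : ∫ x, f x = 1)
    (hf_integrable : Integrable f)
    (hf_supp : ∀ x < a, f x = 0)
    (hf_diff : ∀ x ∈ Ioi a, DifferentiableAt ℝ f x)
    (hlamf : IsLUB {r : ℝ | ∃ y ∈ Ioi a, r = -deriv f y / f y} lamf)
    (hlamf_pos : 0 < lamf)
    (hlam : lamf ≤ lam)
    (F G : ℝ → ℝ)
    (hF : ∀ x, F x = ∫ y in Iic x, f y)
    (hG : ∀ x, G x = F x + f x / lam)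
    (E Z : Ω → ℝ)
    (hE_meas : Measurable E) (hZ_meas : Measurable Z)
    (hEZ_indep : IndepFun E Z P)
    (hE_law : Measure.map E P = expMeasure lam)
    (hZ_law : ∀ x, (Measure.map Z P (Iic x)) = ENNReal.ofReal (G x)) :
    Measure.map (fun ω => E ω + Z ω) P
      = volume.withDensity (fun x => ENNReal.ofReal (f x)) :=
  stmt1_general P f a lamf lam hf_nonneg hf_integrable hf_supp hf_diff hlamf_pos hlam F G hF hG E Z
    hE_meas hZ_meas hEZ_indep hE_law hZ_law
end

section
/- For the hyper-exponential density with parameters p₁ ∈ [0,1], p₂ = 1-p₁, λ₁ > λ₂ > 0, the inequality e(p₁) := (p₁λ₁ + p₂λ₂)/(p₁λ₁² + p₂λ₂²) ≥ max{p₁/λ₁, p₂/λ₂} holds if either (i) λ₁λ₂ > λ₁² - λ₂², or (ii) λ₁λ₂ ≤ λ₁² - λ₂² and p₁ ≥ 1 - λ₁λ₂/(λ₁² - λ₂²). -/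
open Set

/-- for `λ₁ > λ₂ > 0` and `p₁ ∈ [0,1]`, `p₂ = 1 - p₁`, the inequality
`e(p₁) ≥ max{p₁/λ₁, p₂/λ₂}` holds if either (i) `λ₁λ₂ > λ₁² - λ₂²`, or
(ii) `λ₁λ₂ ≤ λ₁² - λ₂²` and `p₁ ≥ 1 - λ₁λ₂/(λ₁² - λ₂²)`. -/
theorem stmt11
    (l₁ l₂ p₁ : ℝ) (hl : l₁ > l₂) (hl₂ : 0 < l₂) (hp₁ : p₁ ∈ Icc (0 : ℝ) 1)
    (hcond : l₁ * l₂ > l₁ ^ 2 - l₂ ^ 2 ∨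
      (l₁ * l₂ ≤ l₁ ^ 2 - l₂ ^ 2 ∧ 1 - l₁ * l₂ / (l₁ ^ 2 - l₂ ^ 2) ≤ p₁)) :
    max (p₁ / l₁) ((1 - p₁) / l₂) ≤
      (p₁ * l₁ + (1 - p₁) * l₂) / (p₁ * l₁ ^ 2 + (1 - p₁) * l₂ ^ 2) := by
  obtain ⟨hp0, hp1⟩ := hp₁
  have hl₁ : 0 < l₁ := lt_trans hl₂ hl
  have hsq : 0 ≤ l₁ ^ 2 - l₂ ^ 2 := by nlinarith
  have hD : 0 < p₁ * l₁ ^ 2 + (1 - p₁) * l₂ ^ 2 := by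
    nlinarith [mul_nonneg hp0 hsq, mul_pos hl₂ hl₂]
  have hkey : (1 - p₁) * (l₁ ^ 2 - l₂ ^ 2) ≤ l₁ * l₂ := by
    rcases hcond with h | ⟨h, h2⟩
    · nlinarith [mul_nonneg hp0 hsq]
    · have hpos : 0 < l₁ ^ 2 - l₂ ^ 2 := by nlinarith [mul_pos hl₁ hl₂]
      have h3 : (1 - p₁) ≤ l₁ * l₂ / (l₁ ^ 2 - l₂ ^ 2) := by linarith
      calc (1 - p₁) * (l₁ ^ 2 - l₂ ^ 2) ≤ l₁ * l₂ / (l₁ ^ 2 - l₂ ^ 2) * (l₁ ^ 2 - l₂ ^ 2) :=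
            mul_le_mul_of_nonneg_right h3 hpos.le
        _ = l₁ * l₂ := div_mul_cancel₀ _ hpos.ne'
  apply max_le
  · rw [div_le_div_iff₀ hl₁ hD]
    nlinarith [mul_nonneg (sub_nonneg.mpr hp1) (mul_nonneg hp0 hsq),
      mul_nonneg (sub_nonneg.mpr hp1) (mul_pos hl₁ hl₂).le]
  · rw [div_le_div_iff₀ hl₂ hD]
    nlinarith [mul_nonneg hp0 (sub_nonneg.mpr hkey)]
end
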